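/- arXiv:1203.4387 — 6 statements merged into one kernel-verified Lean document; each statement's English description precedes it below -/
import Mathlib

section
/- Fix y > 0 and define g_{k,m} (for k ≥ 0, 0 ≤ m ≤ k) as the entries of the inverse of the lower-triangular change-of-basis matrix from the polynomials Γ_k(x) = y^{k/2} T_k((x-(1+y))/√y) to the monomials x^m (with g_{k,k}=1). Then g_{k,m} = Σ_{j=0}^{k-m} y^j · C(k,j) · C(k,m+j), where C(n,r) denotes the binomial coefficient. -/
/-!
Write `y = s²` and substitute `x = 1 + s² + 2s cos θ = |1 + s e^{iθ}|²`, so that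
`(x - (1 + y)) / √y = 2 cos θ`, where `T_m` takes the value `2 cos (mθ)` (and `T_0 = 1`).
Expanding `|(1 + s e^{iθ})^k|²` binomially and grouping the terms `(a, b)` by `m = |a - b|`
writes `x^k` as `Σ_m s^m (Σ_j s^{2j} C(k,j) C(k,m+j)) T_m(2 cos θ)`. The coefficients of such an
expansion are unique: `cos (mθ)` is the Chebyshev polynomial of degree `m` evaluated at `cos θ`,
and a polynomial vanishing on `[-1, 1]` is zero.
-/

open Finset Polynomial Real

lemma sum_range_mul_sum_range_mul_of_even {R : Type*} [CommRing R] (c : ℕ → R) (φ : ℤ → R)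
    (hφ : ∀ n, φ (-n) = φ n) (N : ℕ) :
    ∑ a ∈ range N, ∑ b ∈ range N, c a * c b * φ (a - b) =
      ∑ m ∈ range N, (if m = 0 then 1 else 2) * (∑ j ∈ range (N - m), c (m + j) * c j) * φ m := by
  induction N with
  | zero => simp
  | succ N ih =>
    have hlhs : ∑ a ∈ range (N + 1), ∑ b ∈ range (N + 1), c a * c b * φ (a - b) =
        ∑ a ∈ range N, ∑ b ∈ range N, c a * c b * φ (a - b) +
          2 * ∑ b ∈ range N, c N * c b * φ (N - b) + c N * c N * φ 0 := by
      have hcol : ∑ a ∈ range N, c a * c N * φ (a - N) = ∑ b ∈ range N, c N * c b * φ (N - b) :=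
        sum_congr rfl fun a _ => by rw [← hφ, neg_sub, mul_comm (c a)]
      simp only [sum_range_succ, sum_add_distrib, hcol, sub_self]
      ring
    have hrhs : ∑ m ∈ range (N + 1),
          (if m = 0 then 1 else 2) * (∑ j ∈ range (N + 1 - m), c (m + j) * c j) * φ m =
        ∑ m ∈ range N, (if m = 0 then 1 else 2) * (∑ j ∈ range (N - m), c (m + j) * c j) * φ m +
          ∑ m ∈ range N, 2 * (c N * c (N - (m + 1))) * φ (m + 1 : ℕ) + c N * c N * φ 0 := by
      have hinner : ∀ m ∈ range (N + 1), ∑ j ∈ range (N + 1 - m), c (m + j) * c j =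
          ∑ j ∈ range (N - m), c (m + j) * c j + c N * c (N - m) := by
        intro m hm
        have := mem_range.1 hm
        rw [show N + 1 - m = N - m + 1 by omega, sum_range_succ, show m + (N - m) = N by omega]
      rw [sum_congr rfl fun m hm => by rw [hinner m hm, mul_add, add_mul], sum_add_distrib,
        sum_range_succ _ N, sum_range_succ' _ N]
      simp only [tsub_self, range_zero, sum_empty, mul_zero, zero_mul, add_zero,
        Nat.add_one_ne_zero, ↓reduceIte, tsub_zero, one_mul, Nat.cast_zero, add_assoc]
    have hrefl : 2 * ∑ b ∈ range N, c N * c b * φ (N - b) =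
        ∑ m ∈ range N, 2 * (c N * c (N - (m + 1))) * φ (m + 1 : ℕ) := by
      rw [mul_sum, ← sum_range_reflect]
      refine sum_congr rfl fun m hm => ?_
      have hmN := mem_range.1 hm
      rw [show N - 1 - m = N - (m + 1) by omega,
        show (N : ℤ) - (N - (m + 1) : ℕ) = (m + 1 : ℕ) by omega]
      ring
    rw [hlhs, hrhs, ih, hrefl]

lemma one_add_two_mul_cos_add_sq_pow_eq_double_sum (k : ℕ) (r θ : ℝ) :
    (1 + 2 * r * cos θ + r ^ 2) ^ k = ∑ a ∈ range (k + 1), ∑ b ∈ range (k + 1),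
      (k.choose a * r ^ a) * (k.choose b * r ^ b) * cos (((a - b : ℤ) : ℝ) * θ) := by
  set w := Complex.exp (θ * Complex.I)
  set w' := Complex.exp (-θ * Complex.I)
  have hfactor : ((1 + 2 * r * cos θ + r ^ 2 : ℝ) : ℂ) = (1 + r * w) * (1 + r * w') := by
    have hsum : w + w' = 2 * Complex.cos θ := by
      simp only [w, w', Complex.cos, neg_mul]; ring
    have hprod : w * w' = 1 := by rw [← Complex.exp_add]; simp
    push_cast
    linear_combination (-(r : ℂ)) * hsum - (r : ℂ) ^ 2 * hprod
  have hexpand : ∀ u : ℂ,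
      (1 + r * u) ^ k = ∑ a ∈ range (k + 1), ((k.choose a * r ^ a : ℝ) : ℂ) * u ^ a := by
    intro u
    rw [add_comm, add_pow]
    refine sum_congr rfl fun a _ => ?_
    push_cast; ring
  have hterm : ∀ a b : ℕ,
      w ^ a * w' ^ b = Complex.exp ((((a - b : ℤ) : ℝ) * θ : ℝ) * Complex.I) := by
    intro a b
    rw [← Complex.exp_nat_mul, ← Complex.exp_nat_mul, ← Complex.exp_add]
    push_cast; ring_nf
  calc (1 + 2 * r * cos θ + r ^ 2) ^ k = ((((1 + 2 * r * cos θ + r ^ 2) ^ k : ℝ)) : ℂ).re :=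
        (Complex.ofReal_re _).symm
    _ = ((1 + r * w) ^ k * (1 + r * w') ^ k).re := by rw [Complex.ofReal_pow, hfactor, mul_pow]
    _ = _ := by
      simp only [hexpand, sum_mul_sum, Complex.re_sum]
      refine sum_congr rfl fun a _ => sum_congr rfl fun b _ => ?_
      rw [mul_mul_mul_comm, hterm, ← Complex.ofReal_mul, Complex.re_ofReal_mul,
        Complex.exp_ofReal_mul_I_re]

lemma one_add_two_mul_cos_add_sq_pow_eq_sum_cos (k : ℕ) (r θ : ℝ) :
    (1 + 2 * r * cos θ + r ^ 2) ^ k = ∑ m ∈ range (k + 1), (if m = 0 then 1 else 2) *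
      (r ^ m * ∑ j ∈ range (k - m + 1), (r ^ 2) ^ j * k.choose j * k.choose (m + j)) *
        cos (m * θ) := by
  rw [one_add_two_mul_cos_add_sq_pow_eq_double_sum, sum_range_mul_sum_range_mul_of_even
    (fun a => k.choose a * r ^ a) (fun n => cos (n * θ)) (fun n => by simp)]
  refine sum_congr rfl fun m hm => ?_
  rw [show k + 1 - m = k - m + 1 by have := mem_range.1 hm; omega, Int.cast_natCast]
  congr 2
  rw [mul_sum]
  refine sum_congr rfl fun j _ => ?_
  ring

lemma eq_zero_of_sum_C_mul_eq_zero {R : Type*} [Semiring R] [NoZeroDivisors R] (p : ℕ → R[X])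
    (hdeg : ∀ m, (p m).natDegree ≤ m) (hcoeff : ∀ m, (p m).coeff m ≠ 0) {d : ℕ → R} {N : ℕ}
    (h : ∑ m ∈ range N, C (d m) * p m = 0) : ∀ m < N, d m = 0 := by
  induction N with
  | zero => simp
  | succ N ih =>
    rw [sum_range_succ] at h
    have hlow : (∑ m ∈ range N, C (d m) * p m).coeff N = 0 := by
      rw [finsetSum_coeff]
      refine sum_eq_zero fun m hm => ?_
      rw [coeff_C_mul, coeff_eq_zero_of_natDegree_lt ((hdeg m).trans_lt (mem_range.1 hm)),
        mul_zero]
    have hN : d N = 0 := by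
      have := congrArg (coeff · N) h
      simp only [coeff_add, hlow, coeff_C_mul, zero_add, coeff_zero] at this
      exact (mul_eq_zero.1 this).resolve_right (hcoeff N)
    rw [hN, C_0, zero_mul, add_zero] at h
    intro m hm
    rcases Nat.lt_succ_iff_lt_or_eq.1 hm with hm | rfl
    · exact ih h m hm
    · exact hN

lemma eq_zero_of_forall_sum_mul_cos_eq_zero {N : ℕ} {d : ℕ → ℝ}
    (h : ∀ θ, ∑ m ∈ range N, d m * cos (m * θ) = 0) : ∀ m < N, d m = 0 := by
  set q := ∑ m ∈ range N, C (d m) * Chebyshev.T ℝ m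
  have hroots : Set.Icc (-1 : ℝ) 1 ⊆ {x | q.IsRoot x} := fun x hx => by
    show q.IsRoot x
    rw [← cos_arccos hx.1 hx.2]
    simpa [q, eval_finsetSum, Chebyshev.T_real_cos] using h (arccos x)
  have hq : q = 0 := eq_zero_of_infinite_isRoot q ((Set.Icc_infinite (by norm_num)).mono hroots)
  refine eq_zero_of_sum_C_mul_eq_zero (fun m => Chebyshev.T ℝ m) (fun m => by simp)
    (fun m => ?_) hq
  have hlead := Chebyshev.leadingCoeff_T ℝ m
  rw [leadingCoeff, Chebyshev.natDegree_T, Int.natAbs_natCast] at hlead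
  simp [hlead]

/-- Let `T` be the monic Chebyshev polynomials of the first kind (`T_0 = 1`,
`T_k(2cos θ) = 2cos(kθ)` for `k ≥ 1`), fix `y > 0` and set
`Γ_m(x) = y^{m/2} T_m((x-(1+y))/√y)`. If `g` gives the (lower unitriangular) inverse
change of basis, i.e. `x^k = Σ_{m=0}^k g_{k,m} Γ_m(x)` for all `k` and `x`, then
`g_{k,m} = Σ_{j=0}^{k-m} y^j C(k,j) C(k,m+j)`. -/
theorem inverse_gamma_coefficients_eq_binomial_sum (y : ℝ) (hy : 0 < y)
    (T : ℕ → ℝ → ℝ)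
    (hT0 : ∀ u : ℝ, T 0 u = 1)
    (htrig : ∀ k : ℕ, 1 ≤ k → ∀ θ : ℝ, T k (2 * Real.cos θ) = 2 * Real.cos (k * θ))
    (g : ℕ → ℕ → ℝ)
    (hg : ∀ (k : ℕ) (x : ℝ),
      x ^ k = ∑ m ∈ Finset.range (k + 1),
        g k m * (Real.sqrt y ^ m * T m ((x - (1 + y)) / Real.sqrt y)))
    (k m : ℕ) (hm : m ≤ k) :
    g k m = ∑ j ∈ Finset.range (k - m + 1),
      y ^ j * (k.choose j) * (k.choose (m + j)) := by
  obtain ⟨s, hs, rfl⟩ : ∃ s, 0 < s ∧ y = s ^ 2 := ⟨√y, sqrt_pos.2 hy, (sq_sqrt hy.le).symm⟩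
  simp only [sqrt_sq hs.le] at hg
  have hT : ∀ m θ, T m (2 * cos θ) = (if m = 0 then 1 else 2) * cos (m * θ) := by
    rintro (_ | m) θ
    · simp [hT0]
    · simp [htrig (m + 1) (by omega)]
  have hcos : ∀ θ, ∑ m ∈ range (k + 1), ((if m = 0 then 1 else 2) * s ^ m *
      (g k m - ∑ j ∈ range (k - m + 1), (s ^ 2) ^ j * k.choose j * k.choose (m + j))) *
        cos (m * θ) = 0 := by
    intro θ
    have hx := hg k (1 + 2 * s * cos θ + s ^ 2)
    rw [show (1 + 2 * s * cos θ + s ^ 2 - (1 + s ^ 2)) / s = 2 * cos θ by field_simp; ring,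
      one_add_two_mul_cos_add_sq_pow_eq_sum_cos] at hx
    simp only [hT] at hx
    rw [← sub_eq_zero.2 hx.symm, ← sum_sub_distrib]
    exact sum_congr rfl fun m _ => by ring
  have hweight : (if m = 0 then (1 : ℝ) else 2) * s ^ m ≠ 0 := by split_ifs <;> positivity
  exact sub_eq_zero.1 <| (mul_eq_zero.1 <|
    eq_zero_of_forall_sum_mul_cos_eq_zero hcos m (by omega)).resolve_left hweight
end

section
/- Define g̅_{k,m} := Σ_{j=0}^{k-m} y^j C(k,j) C(k,m+j) for k ≥ 1 and 0 ≤ m ≤ k (with g̅_{k,m} := 0 if m > k). Then g̅ satisfies the recurrences g̅_{k+1,m} = g̅_{k,m-1} + (1+y) g̅_{k,m} + y g̅_{k,m+1} for m ≥ 1, and g̅_{k+1,0} = (1+y) g̅_{k,0} + 2y g̅_{k,1}. -/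
/-- `ḡ_{k,m} = Σ_{j=0}^{k-m} y^j C(k,j) C(k,m+j)` (which is `0` when `m > k`, since
then all binomial coefficients in the sum vanish). -/
def gbar {R : Type*} [CommRing R] (y : R) (k m : ℕ) : R :=
  ∑ j ∈ Finset.range (k - m + 1), y ^ j * (k.choose j) * (k.choose (m + j))

/-!
Write `ḡ_{k,m} = B(k, k, m)` with `B(k, l, m) = Σ_j y^j C(k,j) C(l,m+j)` (`crossSum`).
Pascal's rule in the first binomial gives `B(k+1, l, m) = B(k, l, m) + y B(k, l, m+1)`
(the shift `j ↦ j + 1` produces the factor `y`), and in the second one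
`B(k, l+1, m+1) = B(k, l, m) + B(k, l, m+1)`.
Applying both turns `ḡ_{k+1,m}` into the three-term recurrence. For `m = 0` the second rule
is not available, but `B(k, l, 0)` is symmetric in `k` and `l`, so the first rule applies
twice instead.
-/

open Finset

section CrossSum

variable {R : Type*} [CommRing R] (y : R)

def crossSum (k l m : ℕ) : R :=
  ∑ j ∈ range (k + 1), y ^ j * (k.choose j) * (l.choose (m + j))

lemma crossSum_eq_sum_range {k N : ℕ} (hN : k < N) (l m : ℕ) :
    crossSum y k l m = ∑ j ∈ range N, y ^ j * (k.choose j) * (l.choose (m + j)) := by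
  refine sum_subset (range_subset_range.2 hN) fun j _ hj => ?_
  rw [Nat.choose_eq_zero_of_lt (by simpa using hj)]
  simp

lemma gbar_eq_crossSum (k m : ℕ) : gbar y k m = crossSum y k k m := by
  refine sum_subset (range_subset_range.2 (by omega)) fun j _ hj => ?_
  rw [Nat.choose_eq_zero_of_lt (k := m + j) (by simp at hj; omega)]
  simp

lemma crossSum_zero_comm (k l : ℕ) : crossSum y k l 0 = crossSum y l k 0 := by
  rw [crossSum_eq_sum_range y (N := k + l + 1) (by omega),
    crossSum_eq_sum_range y (N := k + l + 1) (by omega)]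
  simp only [zero_add, mul_right_comm]

lemma crossSum_succ_left (k l m : ℕ) :
    crossSum y (k + 1) l m = crossSum y k l m + y * crossSum y k l (m + 1) := by
  have pascal : ∀ j, y ^ (j + 1) * ((k + 1).choose (j + 1) : R) * (l.choose (m + (j + 1))) =
      y * (y ^ j * (k.choose j) * (l.choose (m + 1 + j))) +
        y ^ (j + 1) * (k.choose (j + 1)) * (l.choose (m + (j + 1))) := fun j => by
    rw [Nat.choose_succ_succ', show m + 1 + j = m + (j + 1) by omega]
    push_cast
    ring
  rw [crossSum_eq_sum_range y (show k < k + 2 by omega) l m, crossSum, crossSum, sum_range_succ',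
    sum_range_succ' _ (k + 1)]
  simp only [pascal, sum_add_distrib, ← mul_sum, Nat.choose_zero_right]
  ring

lemma crossSum_succ_succ_right (k l m : ℕ) :
    crossSum y k (l + 1) (m + 1) = crossSum y k l m + crossSum y k l (m + 1) := by
  simp only [crossSum, ← sum_add_distrib, show ∀ j, m + 1 + j = m + j + 1 by omega,
    Nat.choose_succ_succ', Nat.cast_add]
  exact sum_congr rfl fun j _ => by ring

end CrossSum

theorem gbar_recurrences_general {R : Type*} [CommRing R] (y : R) (k m : ℕ)
    (hm : 1 ≤ m) :
    gbar y (k + 1) m =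
      gbar y k (m - 1) + (1 + y) * gbar y k m + y * gbar y k (m + 1) ∧
    gbar y (k + 1) 0 = (1 + y) * gbar y k 0 + 2 * y * gbar y k 1 := by
  obtain ⟨n, rfl⟩ := Nat.exists_eq_add_of_le' hm
  simp only [gbar_eq_crossSum, Nat.add_sub_cancel, crossSum_succ_left]
  constructor
  · simp only [crossSum_succ_succ_right]
    ring
  · rw [crossSum_zero_comm y k (k + 1), crossSum_succ_left,
      crossSum_succ_succ_right y k k 0]
    ring

/-- The quantities `ḡ_{k,m}` satisfy the recurrences
`ḡ_{k+1,m} = ḡ_{k,m-1} + (1+y) ḡ_{k,m} + y ḡ_{k,m+1}` for `m ≥ 1`, and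
`ḡ_{k+1,0} = (1+y) ḡ_{k,0} + 2y ḡ_{k,1}`. -/
theorem gbar_recurrences {R : Type*} [CommRing R] (y : R) (k m : ℕ)
    (hk : 1 ≤ k) (hm : 1 ≤ m) :
    gbar y (k + 1) m =
      gbar y k (m - 1) + (1 + y) * gbar y k m + y * gbar y k (m + 1) ∧
    gbar y (k + 1) 0 = (1 + y) * gbar y k 0 + 2 * y * gbar y k 1 :=
  gbar_recurrences_general y k m hm
end

section
/- For k ≥ 1 and 0 ≤ m ≤ k, the families of coloring sets D_{j,m,k} satisfy: for m ≥ 1, #D_{j,m,k+1} = #D_{j,m-1,k} + #D_{j-1,m,k} + #D_{j,m,k} + #D_{j-1,m+1,k}, with the convention #D_{j,m,k} = 0 if j < 0 or j > k-m. -/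
/-!
The colours of the odd and of the even positions of `{1, …, 2k}` are chosen independently, so
`#D_{j,m,k} = C(k, j) * C(k, m + j)`, read as `0` for `j < 0`. Pascal's rule applied to both
factors of `#D_{j,m,k+1}` expands it into the four products on the right.
-/

/-- The set `D_{j,m,k}` of black/white colorings of `{1,...,2k}` (realized as
`Fin (2k)`, with `x` standing for the number `x+1`; `c x = true` means black) with
exactly `j` black odd numbers and exactly `m+j` white even numbers. Here `j : ℤ`, so
`D_{j,m,k} = ∅` whenever `j < 0` or `j > k - m`. -/
def Dset (k m : ℕ) (j : ℤ) : Finset (Fin (2 * k) → Bool) :=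
  Finset.univ.filter (fun c =>
    ((Finset.univ.filter (fun x : Fin (2 * k) =>
      (x.val + 1) % 2 = 1 ∧ c x = true)).card : ℤ) = j ∧
    ((Finset.univ.filter (fun x : Fin (2 * k) =>
      (x.val + 1) % 2 = 0 ∧ c x = false)).card : ℤ) = (m : ℤ) + j)

open Finset

theorem card_filter_card_eq_choose {β : Type*} [Fintype β] [DecidableEq β] (t : Bool) (n : ℕ) :
    #{f : β → Bool | #{x | f x = t} = n} = (Fintype.card β).choose n := by
  rw [← card_univ, ← card_powersetCard]
  refine card_nbij' (fun f => univ.filter (f · = t)) (fun s x => if x ∈ s then t else !t)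
    ?_ ?_ ?_ ?_
  · intro f hf
    simpa using hf
  · intro s hs
    simp only [mem_coe, mem_powersetCard, mem_filter, mem_univ, true_and] at hs ⊢
    convert hs.2
    ext x; by_cases hx : x ∈ s <;> simp [hx]
  · intro f _
    funext x; by_cases hx : f x = t <;> cases t <;> simp_all
  · intro s _
    ext x; by_cases hx : x ∈ s <;> simp [hx]

theorem card_filter_subtype {α : Type*} [Fintype α] (p q : α → Prop) [DecidablePred p]
    [DecidablePred q] : #{y : Subtype p | q y} = #{x | p x ∧ q x} := by
  rw [← card_map (Function.Embedding.subtype p)]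
  congr 1; ext; simp [and_comm]

theorem card_filter_card_and_card_eq_choose_mul {α : Type*} [Fintype α] [DecidableEq α]
    (p : α → Prop) [DecidablePred p] (a b : ℕ) :
    #{c : α → Bool | #{x | p x ∧ c x = true} = a ∧ #{x | ¬p x ∧ c x = false} = b} =
      (#{x | p x}).choose a * (#{x | ¬p x}).choose b := by
  let split : (α → Bool) ≃ ({x // p x} → Bool) × ({x // ¬p x} → Bool) :=
    ((Equiv.sumCompl p).arrowCongr (Equiv.refl Bool)).symm.trans
      (Equiv.sumArrowEquivProdArrow _ _ _)
  rw [card_equiv split (t := univ ×ˢ univ |>.filter fun d =>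
      #{y | d.1 y = true} = a ∧ #{y | d.2 y = false} = b),
    filter_product (fun f : {x // p x} → Bool => #{y | f y = true} = a)
      (fun g : {x // ¬p x} → Bool => #{y | g y = false} = b), card_product,
    card_filter_card_eq_choose, card_filter_card_eq_choose, Fintype.card_subtype,
    Fintype.card_subtype]
  intro c
  simp [split, card_filter_subtype p (c · = true), card_filter_subtype (¬p ·) (c · = false)]

theorem card_filter_fin_dvd_val_succ (n p : ℕ) : #{x : Fin n | p ∣ x.val + 1} = n / p := by
  rw [← Nat.card_multiples, ← card_map Fin.valEmbedding]
  congr 1; ext e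
  simp only [mem_map, mem_filter, mem_univ, true_and, Fin.valEmbedding_apply, mem_range]
  constructor
  · rintro ⟨x, hx, rfl⟩
    exact ⟨x.isLt, hx⟩
  · rintro ⟨he, hdvd⟩
    exact ⟨⟨e, he⟩, hdvd, rfl⟩

def intChoose (n : ℕ) (j : ℤ) : ℕ := if 0 ≤ j then n.choose j.toNat else 0

theorem intChoose_natCast (n k : ℕ) : intChoose n k = n.choose k := by
  simp [intChoose]

theorem intChoose_of_neg {n : ℕ} {j : ℤ} (hj : j < 0) : intChoose n j = 0 := by
  simp [intChoose, not_le.mpr hj]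

theorem intChoose_succ (n : ℕ) (j : ℤ) :
    intChoose (n + 1) j = intChoose n (j - 1) + intChoose n j := by
  rcases lt_or_ge j 0 with hj | hj
  · rw [intChoose_of_neg hj, intChoose_of_neg hj, intChoose_of_neg (by omega)]
  lift j to ℕ using hj
  cases j with
  | zero => simp [intChoose]
  | succ k =>
    rw [show ((k + 1 : ℕ) : ℤ) - 1 = k by push_cast; ring]
    simp only [intChoose_natCast, Nat.choose_succ_succ']

theorem Dset_eq_empty_of_neg (k m : ℕ) {j : ℤ} (hj : j < 0) : Dset k m j = ∅ := by
  refine eq_empty_of_forall_notMem fun c hc => ?_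
  have := (mem_filter.mp hc).2.1
  omega

theorem card_Dset_natCast (k m n : ℕ) : #(Dset k m n) = k.choose n * k.choose (m + n) := by
  have heven : #{x : Fin (2 * k) | ¬(x.val + 1) % 2 = 1} = k := by
    calc _ = #{x : Fin (2 * k) | 2 ∣ x.val + 1} := by
          congr 1; ext x; simp only [mem_filter, mem_univ, true_and]; omega
      _ = k := by rw [card_filter_fin_dvd_val_succ]; omega
  have hodd : #{x : Fin (2 * k) | (x.val + 1) % 2 = 1} = k := by
    have := card_filter_add_card_filter_not (s := univ)
      fun x : Fin (2 * k) => (x.val + 1) % 2 = 1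
    rw [card_univ, Fintype.card_fin, heven] at this
    omega
  calc #(Dset k m n)
      = #{c : Fin (2 * k) → Bool | #{x | (x.val + 1) % 2 = 1 ∧ c x = true} = n ∧
          #{x | ¬(x.val + 1) % 2 = 1 ∧ c x = false} = m + n} := by
        refine congrArg card (filter_congr fun c _ => ?_)
        have hparity : ∀ x : Fin (2 * k), (x.val + 1) % 2 = 0 ↔ ¬(x.val + 1) % 2 = 1 := by
          omega
        simp only [hparity]
        omega
    _ = k.choose n * k.choose (m + n) := by
        rw [card_filter_card_and_card_eq_choose_mul, hodd, heven]

theorem card_Dset (k m : ℕ) (j : ℤ) : #(Dset k m j) = intChoose k j * intChoose k (m + j) := by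
  rcases lt_or_ge j 0 with hj | hj
  · rw [Dset_eq_empty_of_neg k m hj, intChoose_of_neg hj, card_empty, zero_mul]
  lift j to ℕ using hj
  rw [card_Dset_natCast, ← Nat.cast_add, intChoose_natCast, intChoose_natCast]

theorem card_Dset_recurrence_general (k m : ℕ) (hm : 1 ≤ m)
    (j : ℤ) :
    (Dset (k + 1) m j).card =
      (Dset k (m - 1) j).card + (Dset k m (j - 1)).card + (Dset k m j).card +
        (Dset k (m + 1) (j - 1)).card := by
  have hpred : ((m - 1 : ℕ) : ℤ) + j = m + j - 1 := by omega
  have hshift : (m : ℤ) + (j - 1) = m + j - 1 := by ring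
  have hsucc : ((m + 1 : ℕ) : ℤ) + (j - 1) = m + j := by push_cast; ring
  simp only [card_Dset, hpred, hshift, hsucc, intChoose_succ]
  ring

/-- For `m ≥ 1`:
`#D_{j,m,k+1} = #D_{j,m-1,k} + #D_{j-1,m,k} + #D_{j,m,k} + #D_{j-1,m+1,k}`. -/
theorem card_Dset_recurrence (k m : ℕ) (hk : 1 ≤ k) (hm : 1 ≤ m) (hmk : m ≤ k)
    (j : ℤ) :
    (Dset (k + 1) m j).card =
      (Dset k (m - 1) j).card + (Dset k m (j - 1)).card + (Dset k m j).card +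
        (Dset k (m + 1) (j - 1)).card :=
  card_Dset_recurrence_general k m hm j
end

section
/- Σ_{j=0}^{k} y^j C(k,j) C(k,j) satisfies the identity Σ_{j} y^j C(k+1,j) C(k+1,j) = (1+y) Σ_j y^j C(k,j)C(k,j) + 2y Σ_j y^j C(k,j)C(k,1+j), i.e. the m=0 case of the g̅-recurrence g̅_{k+1,0} = (1+y) g̅_{k,0} + 2y g̅_{k,1} holds, where g̅_{k,m} = Σ_{j=0}^{k-m} y^j C(k,j) C(k,m+j). -/
open Finset

section

variable {R : Type*} [CommRing R] (y : R)

theorem gbar_eq_sum_range_of_le {k m n : ℕ} (hn : k - m + 1 ≤ n) :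
    gbar y k m = ∑ j ∈ range n, y ^ j * (k.choose j) * (k.choose (m + j)) := by
  refine sum_subset (range_subset_range.mpr hn) fun j _ hj => ?_
  rw [mem_range, not_lt] at hj
  rw [Nat.choose_eq_zero_of_lt (by omega : k < m + j), Nat.cast_zero, mul_zero]

theorem pow_mul_choose_succ_succ_sq (k j : ℕ) :
    y ^ (j + 1) * ((k + 1).choose (j + 1)) * ((k + 1).choose (j + 1)) =
      y * (y ^ j * (k.choose j) * (k.choose j)) +
        2 * y * (y ^ j * (k.choose j) * (k.choose (1 + j))) +
        y ^ (j + 1) * (k.choose (j + 1)) * (k.choose (j + 1)) := by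
  rw [Nat.choose_succ_succ, add_comm 1 j]
  push_cast
  ring

end

/-- The `m = 0` case of the `ḡ`-recurrence:
`Σ_j y^j C(k+1,j)² = (1+y) Σ_j y^j C(k,j)² + 2y Σ_j y^j C(k,j)C(k,1+j)`,
i.e. `ḡ_{k+1,0} = (1+y) ḡ_{k,0} + 2y ḡ_{k,1}`. -/
theorem gbar_recurrence_zero {R : Type*} [CommRing R] (y : R) (k : ℕ) :
    gbar y (k + 1) 0 = (1 + y) * gbar y k 0 + 2 * y * gbar y k 1 := by
  have hk0 : gbar y k 0 = ∑ j ∈ range (k + 1), y ^ j * (k.choose j) * (k.choose j) := by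
    simpa only [zero_add] using gbar_eq_sum_range_of_le y (m := 0) (n := k + 1) (by omega)
  have hk0_shift : gbar y k 0 =
      ∑ j ∈ range (k + 1), y ^ (j + 1) * (k.choose (j + 1)) * (k.choose (j + 1)) + 1 := by
    rw [gbar_eq_sum_range_of_le y (n := k + 2) (by omega), sum_range_succ']
    simp
  have hk1 : gbar y k 1 = ∑ j ∈ range (k + 1), y ^ j * (k.choose j) * (k.choose (1 + j)) :=
    gbar_eq_sum_range_of_le y (by omega)
  rw [gbar, Nat.sub_zero]
  simp only [zero_add]
  rw [sum_range_succ', sum_congr rfl fun j _ => pow_mul_choose_succ_succ_sq y k j]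
  simp only [sum_add_distrib, ← mul_sum, ← hk0, ← hk1, pow_zero, Nat.choose_zero_right,
    Nat.cast_one, mul_one]
  linear_combination -hk0_shift
end

section
/- A non-crossing partition π of the disjoint union of two cycles [2k_1] ∪ [2k_2] consisting entirely of 2-blocks each joining the two cycles (so k_1 = k_2 = m and every point is a connector) that is dihedral is necessarily of the form π_g = {{(1,r),(2,g(r))} : r = 1,...,2m} for some g in the dihedral group D_{4m} ≤ Sym(2m), and conversely every π_g with g ∈ D_{4m} is such a partition. -/
/-- A partition of the disjoint union of two cycles `[2m] ∪ [2m]` all of whose blocks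
are 2-blocks `{(1,r),(2,f r)}` joining the two circles is encoded by the permutation
`f` of `ZMod (2m)` (the class of `i` standing for the point `i`). All points are
connectors, so connectors `l, l'` on a circle are neighboring iff they are cyclically
adjacent, and such a (non-crossing) partition is dihedral iff `f` sends adjacent
points to adjacent points, i.e. `f (r+1) = f r ± 1` for all `r`. The dihedral
partitions are exactly the `π_g` for `g` in the dihedral group `D_{4m}` generated by
the rotation `x ↦ x + 1` and the reflection `x ↦ 1 - x`. -/
theorem dihedral_matching_iff_mem_dihedral_group (m : ℕ) (hm : 2 ≤ m)
    (f : Equiv.Perm (ZMod (2 * m))) :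
    (∀ r : ZMod (2 * m), f (r + 1) = f r + 1 ∨ f (r + 1) = f r - 1) ↔
      f ∈ Subgroup.closure
        ({Equiv.addRight (1 : ZMod (2 * m)), Equiv.subLeft (1 : ZMod (2 * m))} :
          Set (Equiv.Perm (ZMod (2 * m)))) := by
  haveI : NeZero (2 * m) := ⟨by omega⟩
  have htwo : (2 : ZMod (2 * m)) ≠ 0 := by
    have h : ((2 : ℕ) : ZMod (2 * m)) ≠ 0 := by
      rw [Ne, ZMod.natCast_eq_zero_iff]
      intro hdvd
      have := Nat.le_of_dvd (by norm_num) hdvd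
      omega
    simpa using h
  have hcast : ∀ r : ZMod (2 * m), ((r.val : ℕ) : ZMod (2 * m)) = r := fun r =>
    ZMod.natCast_rightInverse r
  set S : Set (Equiv.Perm (ZMod (2 * m))) :=
    {Equiv.addRight (1 : ZMod (2 * m)), Equiv.subLeft (1 : ZMod (2 * m))} with hS
  have haddN : ∀ n : ℕ, Equiv.addRight ((n : ℕ) : ZMod (2 * m)) ∈ Subgroup.closure S := by
    intro n
    induction n with
    | zero =>
        have h : Equiv.addRight ((0 : ℕ) : ZMod (2 * m)) = 1 := by ext x; simp
        rw [h]; exact one_mem _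
    | succ n ih =>
        have h : Equiv.addRight (((n + 1 : ℕ)) : ZMod (2 * m)) =
            Equiv.addRight (1 : ZMod (2 * m)) * Equiv.addRight ((n : ℕ) : ZMod (2 * m)) := by
          ext x; simp only [Equiv.Perm.mul_apply, Equiv.coe_addRight]; push_cast; ring
        rw [h]
        exact mul_mem (Subgroup.subset_closure (Or.inl rfl)) ih
  have hadd : ∀ c : ZMod (2 * m), Equiv.addRight c ∈ Subgroup.closure S := by
    intro c
    rw [← hcast c]; exact haddN c.val
  constructor
  · intro hf
    have keyp : ∀ r, f (r + 1) = f r + 1 → f (r + 1 + 1) = f (r + 1) + 1 := by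
      intro r h1
      rcases hf (r + 1) with h2 | h2
      · exact h2
      · exfalso
        have he : f (r + 1 + 1) = f r := by rw [h2, h1]; ring
        have h3 : r + 1 + 1 = r := f.injective he
        exact htwo (by linear_combination h3)
    have keym : ∀ r, f (r + 1) = f r - 1 → f (r + 1 + 1) = f (r + 1) - 1 := by
      intro r h1
      rcases hf (r + 1) with h2 | h2
      · exfalso
        have he : f (r + 1 + 1) = f r := by rw [h2, h1]; ring
        have h3 : r + 1 + 1 = r := f.injective he
        exact htwo (by linear_combination h3)
      · exact h2
    rcases hf 0 with h0 | h0
    · -- rotation case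
      have claim : ∀ n : ℕ, f ((n : ZMod (2 * m))) = (n : ZMod (2 * m)) + f 0 ∧
          f ((n : ZMod (2 * m)) + 1) = f ((n : ZMod (2 * m))) + 1 := by
        intro n
        induction n with
        | zero => exact ⟨by simp, by simpa using h0⟩
        | succ n ih =>
            obtain ⟨ha, hb⟩ := ih
            constructor
            · push_cast
              rw [hb, ha]; ring
            · push_cast
              exact keyp _ hb
      have hform : ∀ r, f r = r + f 0 := by
        intro r
        have h := (claim r.val).1
        rwa [hcast] at h
      have hfe : f = Equiv.addRight (f 0) := by
        ext x; simp only [Equiv.coe_addRight]; exact hform x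
      rw [hfe]; exact hadd _
    · -- reflection case
      have claim : ∀ n : ℕ, f ((n : ZMod (2 * m))) = f 0 - (n : ZMod (2 * m)) ∧
          f ((n : ZMod (2 * m)) + 1) = f ((n : ZMod (2 * m))) - 1 := by
        intro n
        induction n with
        | zero => exact ⟨by simp, by simpa using h0⟩
        | succ n ih =>
            obtain ⟨ha, hb⟩ := ih
            constructor
            · push_cast
              rw [hb, ha]; ring
            · push_cast
              exact keym _ hb
      have hform : ∀ r, f r = f 0 - r := by
        intro r
        have h := (claim r.val).1
        rwa [hcast] at h
      have hfe : f = Equiv.addRight (f 0 - 1) * Equiv.subLeft (1 : ZMod (2 * m)) := by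
        ext x; simp only [Equiv.Perm.mul_apply, Equiv.coe_addRight, Equiv.subLeft_apply]
        rw [hform]; ring
      rw [hfe]
      exact mul_mem (hadd _) (Subgroup.subset_closure (Or.inr rfl))
  · intro hmem
    have hP : (∃ c, ∀ x, f x = x + c) ∨ (∃ c, ∀ x, f x = c - x) := by
      induction hmem using Subgroup.closure_induction with
      | mem g hg =>
          rcases hg with hg | hg
          · left; exact ⟨1, by subst hg; intro x; simp⟩
          · right; exact ⟨1, by subst hg; intro x; simp⟩
      | one => left; exact ⟨0, by simp⟩
      | mul g h hg hh ihg ihh =>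
          rcases ihg with ⟨c, hc⟩ | ⟨c, hc⟩ <;> rcases ihh with ⟨d, hd⟩ | ⟨d, hd⟩
          · left; exact ⟨d + c, fun x => by simp [Equiv.Perm.mul_apply, hc, hd]; ring⟩
          · right; exact ⟨d + c, fun x => by simp [Equiv.Perm.mul_apply, hc, hd]; ring⟩
          · right; exact ⟨c - d, fun x => by simp [Equiv.Perm.mul_apply, hc, hd]; ring⟩
          · left; exact ⟨c - d, fun x => by simp [Equiv.Perm.mul_apply, hc, hd]; ring⟩
      | inv g hg ihg =>
          rcases ihg with ⟨c, hc⟩ | ⟨c, hc⟩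
          · left
            refine ⟨-c, fun x => ?_⟩
            have : g (x + -c) = x := by rw [hc]; ring
            have := congrArg g.symm this
            simpa using this.symm
          · right
            refine ⟨c, fun x => ?_⟩
            have : g (c - x) = x := by rw [hc]; ring
            have := congrArg g.symm this
            simpa using this.symm
    intro r
    rcases hP with ⟨c, hc⟩ | ⟨c, hc⟩
    · left; rw [hc, hc]; ring
    · right; rw [hc, hc]; ring
end

section
/- Let π be a partition of M = ⋃_{i=1}^j {i}×[2k_i] (j ≥ 3 circles) that is connected, consists of one 4-block and otherwise only 2-blocks, and suppose every 2-block connecting two different circles (if any existed) would consist of simple connectors; if in addition no 2-block connects two different circles, then the 4-block must meet all j circles — which is impossible for j ≥ 5 — and for j = 3 or 4 at least two elements of the 4-block are simple connectors. -/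
/-- A point `a` of `M = ⋃ᵢ {i}×[2kᵢ]` is a *simple connector* of the partition
(equivalence relation) `s` if it is equivalent to some point on a different circle,
but not equivalent to any other point of its own circle. -/
def SimpleConnector {j : ℕ} {k : Fin j → ℕ} (s : Setoid ((i : Fin j) × Fin (2 * k i)))
    (a : (i : Fin j) × Fin (2 * k i)) : Prop :=
  (∃ b, s.r a b ∧ b.1 ≠ a.1) ∧ ∀ b, s.r a b → b ≠ a → b.1 ≠ a.1

/-- Let `s` be a connected partition of `M = ⋃ᵢ {i}×[2kᵢ]` (`j ≥ 3` nonempty circles)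
with exactly one 4-block and otherwise only 2-blocks, and suppose no 2-block connects
two different circles. Then the 4-block meets all `j` circles — so necessarily
`j ≤ 4` — and at least two elements of the 4-block are simple connectors. -/
theorem four_block_meets_all_circles (j : ℕ) (hj : 3 ≤ j) (k : Fin j → ℕ)
    (hk : ∀ i, 1 ≤ k i) (s : Setoid ((i : Fin j) × Fin (2 * k i)))
    (hconn : ∀ A : Finset (Fin j), A.Nonempty → A ≠ Finset.univ →
      ∃ x y : (i : Fin j) × Fin (2 * k i), s.r x y ∧ x.1 ∈ A ∧ y.1 ∉ A)
    (hsizes : ∀ x : (i : Fin j) × Fin (2 * k i),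
      Nat.card {y // s.r x y} = 2 ∨ Nat.card {y // s.r x y} = 4)
    (hex4 : ∃ x : (i : Fin j) × Fin (2 * k i), Nat.card {y // s.r x y} = 4)
    (huniq4 : ∀ x y : (i : Fin j) × Fin (2 * k i),
      Nat.card {z // s.r x z} = 4 → Nat.card {z // s.r y z} = 4 → s.r x y)
    (hno2cross : ∀ x y : (i : Fin j) × Fin (2 * k i),
      s.r x y → x.1 ≠ y.1 → Nat.card {z // s.r x z} = 4) :
    (∀ i : Fin j, ∃ x : (i' : Fin j) × Fin (2 * k i'),
        x.1 = i ∧ Nat.card {z // s.r x z} = 4) ∧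
      j ≤ 4 ∧
      ∃ x y : (i : Fin j) × Fin (2 * k i), x ≠ y ∧ s.r x y ∧
        Nat.card {z // s.r x z} = 4 ∧ SimpleConnector s x ∧ SimpleConnector s y := by
  classical
  obtain ⟨x₀, hx₀⟩ := hex4
  have hsymm : ∀ {x y : (i : Fin j) × Fin (2 * k i)}, s.r x y → s.r y x :=
    fun h => s.iseqv.symm h
  have htrans : ∀ {x y z : (i : Fin j) × Fin (2 * k i)}, s.r x y → s.r y z → s.r x z :=
    fun h h' => s.iseqv.trans h h'
  have hcard_eq : ∀ x, s.r x₀ x → Nat.card {z // s.r x z} = 4 := by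
    intro x hx
    rw [Nat.card_congr (Equiv.subtypeEquivRight
      (fun z => ⟨fun h => htrans hx h, fun h => htrans (hsymm hx) h⟩ :
        ∀ z, s.r x z ↔ s.r x₀ z))]
    exact hx₀
  have hmem4 : ∀ x, Nat.card {z // s.r x z} = 4 → s.r x₀ x :=
    fun x hx => huniq4 x₀ x hx₀ hx
  have stepA : ∀ i : Fin j, ∃ x : (i' : Fin j) × Fin (2 * k i'),
      x.1 = i ∧ Nat.card {z // s.r x z} = 4 := by
    intro i
    have hne : ({i} : Finset (Fin j)) ≠ Finset.univ := by
      intro h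
      have h1 : ({i} : Finset (Fin j)).card = 1 := Finset.card_singleton i
      rw [h, Finset.card_univ, Fintype.card_fin] at h1
      omega
    obtain ⟨x, y, hxy, hxA, hyA⟩ := hconn {i} ⟨i, Finset.mem_singleton_self i⟩ hne
    rw [Finset.mem_singleton] at hxA
    rw [Finset.mem_singleton] at hyA
    refine ⟨x, hxA, hno2cross x y hxy ?_⟩
    rw [hxA]; exact fun h => hyA h.symm
  set B : Finset ((i : Fin j) × Fin (2 * k i)) :=
    Finset.univ.filter (fun z => s.r x₀ z) with hBdef
  have hmemB : ∀ z, z ∈ B ↔ s.r x₀ z := by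
    intro z; simp [hBdef]
  have hBcard : B.card = 4 := by
    have h := hx₀
    rw [Nat.card_eq_fintype_card, Fintype.card_subtype] at h
    exact h
  have himg : B.image Sigma.fst = Finset.univ := by
    apply Finset.eq_univ_iff_forall.mpr
    intro i
    obtain ⟨x, hx1, hx4⟩ := stepA i
    exact Finset.mem_image.mpr ⟨x, (hmemB x).mpr (hmem4 x hx4), hx1⟩
  have hj4 : j ≤ 4 := by
    have h := Finset.card_image_le (s := B) (f := Sigma.fst)
    rw [himg, Finset.card_univ, Fintype.card_fin, hBcard] at h
    exact h
  -- fibers of the 4-block over circles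
  set c : Fin j → ℕ := fun i => (B.filter (fun z => Sigma.fst z = i)).card with hc
  have hsum : ∑ i ∈ Finset.univ, c i = 4 := by
    rw [← hBcard]
    rw [← himg]
    exact (Finset.card_eq_sum_card_image Sigma.fst B).symm
  have hc1 : ∀ i : Fin j, 1 ≤ c i := by
    intro i
    obtain ⟨x, hxB, hx1⟩ := Finset.mem_image.mp (himg ▸ Finset.mem_univ i)
    have : x ∈ B.filter (fun z => Sigma.fst z = i) := Finset.mem_filter.mpr ⟨hxB, hx1⟩
    exact Finset.card_pos.mpr ⟨x, this⟩
  set I2 : Finset (Fin j) := Finset.univ.filter (fun i => 2 ≤ c i) with hI2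
  set I1 : Finset (Fin j) := Finset.univ.filter (fun i => ¬ 2 ≤ c i) with hI1
  have hsplitcard : I2.card + I1.card = j := by
    rw [hI2, hI1, Finset.card_filter_add_card_filter_not,
      Finset.card_univ, Fintype.card_fin]
  have hsplit : ∑ i ∈ I2, c i + ∑ i ∈ I1, c i = 4 := by
    rw [hI2, hI1, Finset.sum_filter_add_sum_filter_not]
    exact hsum
  have hlb2 : I2.card * 2 ≤ ∑ i ∈ I2, c i := by
    have := Finset.card_nsmul_le_sum I2 c 2 (fun i hi => (Finset.mem_filter.mp hi).2)
    simpa [smul_eq_mul] using this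
  have hlb1 : I1.card * 1 ≤ ∑ i ∈ I1, c i := by
    have := Finset.card_nsmul_le_sum I1 c 1 (fun i _ => hc1 i)
    simpa [smul_eq_mul] using this
  have hI1card : 2 ≤ I1.card := by omega
  obtain ⟨i₁, hi₁, i₂, hi₂, hi12⟩ := Finset.one_lt_card.mp hI1card
  have hcone : ∀ i ∈ I1, (B.filter (fun z => Sigma.fst z = i)).card = 1 := by
    intro i hi
    have h2 := (Finset.mem_filter.mp hi).2
    have h1 := hc1 i
    have h3 : c i = 1 := by omega
    rw [hc] at h3
    exact h3
  -- extract the unique element of each singleton fiber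
  have key : ∀ i ∈ I1, ∃ a : (i' : Fin j) × Fin (2 * k i'), a ∈ B ∧ a.1 = i ∧
      ∀ z ∈ B, z.1 = i → z = a := by
    intro i hi
    obtain ⟨a, ha⟩ := Finset.card_eq_one.mp (hcone i hi)
    have haB : a ∈ B ∧ a.1 = i := by
      have : a ∈ B.filter (fun z => Sigma.fst z = i) := ha ▸ Finset.mem_singleton_self a
      exact Finset.mem_filter.mp this
    refine ⟨a, haB.1, haB.2, fun z hz hz1 => ?_⟩
    have : z ∈ B.filter (fun z => Sigma.fst z = i) := Finset.mem_filter.mpr ⟨hz, hz1⟩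
    rw [ha, Finset.mem_singleton] at this
    exact this
  obtain ⟨a, haB, ha1, haU⟩ := key i₁ hi₁
  obtain ⟨b, hbB, hb1, hbU⟩ := key i₂ hi₂
  have hra : s.r x₀ a := (hmemB a).mp haB
  have hrb : s.r x₀ b := (hmemB b).mp hbB
  have hab : a ≠ b := fun h => hi12 (ha1 ▸ hb1 ▸ congrArg Sigma.fst h)
  have hab1 : a.1 ≠ b.1 := by rw [ha1, hb1]; exact hi12
  refine ⟨stepA, hj4, a, b, hab, htrans (hsymm hra) hrb, hcard_eq a hra, ?_, ?_⟩
  · constructor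
    · exact ⟨b, htrans (hsymm hra) hrb, fun h => hab1 h.symm⟩
    · intro z hz hza hz1
      exact hza (haU z ((hmemB z).mpr (htrans hra hz)) (hz1.trans ha1))
  · constructor
    · exact ⟨a, htrans (hsymm hrb) hra, fun h => hab1 h⟩
    · intro z hz hzb hz1
      exact hzb (hbU z ((hmemB z).mpr (htrans hrb hz)) (hz1.trans hb1))
end
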